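/- Let μ : ℝ≥0 → ℝ be continuous and let G_ε(c, t) = ∫_{c−ℓ}^{c+ℓ} exp(−(x − μ(t))²/(2ε²)) dx, with ℓ > 0. Then for every t, the choice c = μ(t) maximizes G_ε(c,t) over c ∈ ℝ, and hence for any weight α(t) ≥ 0 with ∫₀^∞ α(t) G_ε(μ(t), t) dt < ∞, the functional c(·) ↦ ∫₀^∞ α(t) G_ε(c(t), t) dt over continuous c is maximized by c(t) = μ(t). -/

import Mathlib

/-!
A window `[c - ℓ, c + ℓ]` and the centred window `[-ℓ, ℓ]` share the stretch between them; for
`c ≥ 0` what the shifted window gains on `[ℓ, c + ℓ]` is the translate by `2ℓ` of what it loses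
on `[-ℓ, c - ℓ]`, and the translate lies farther from the origin (`c ≤ 0` follows by reflection).
So for any symmetric decreasing density, in particular the Gaussian, the centred window carries
the most mass, and the weighted time integral is maximised pointwise by tracking the centre.
-/

open MeasureTheory Real Set

def IsSymmetricDecreasing (f : ℝ → ℝ) : Prop :=
  ∀ x y, |x| ≤ |y| → f y ≤ f x

namespace IsSymmetricDecreasing

variable {f : ℝ → ℝ} (hf : IsSymmetricDecreasing f)
include hf

theorem comp_neg : IsSymmetricDecreasing fun x => f (-x) := fun x y hxy => by
  apply hf
  rwa [abs_neg, abs_neg]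

theorem intervalIntegrable (a b : ℝ) : IntervalIntegrable f volume a b := by
  have from_zero : ∀ b, IntervalIntegrable f volume 0 b := by
    intro b
    rcases le_total 0 b with hb | hb
    · refine AntitoneOn.intervalIntegrable fun x hx y hy hxy => hf _ _ ?_
      rw [uIcc_of_le hb] at hx hy
      rwa [abs_of_nonneg hx.1, abs_of_nonneg hy.1]
    · refine MonotoneOn.intervalIntegrable fun x hx y hy hxy => hf _ _ ?_
      rw [uIcc_of_ge hb] at hx hy
      rw [abs_of_nonpos hx.2, abs_of_nonpos hy.2]
      linarith
  exact (from_zero a).symm.trans (from_zero b)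

theorem intervalIntegral_shift_le_of_nonneg {ℓ d : ℝ} (hℓ : 0 ≤ ℓ) (hd : 0 ≤ d) :
    ∫ x in (d - ℓ)..(d + ℓ), f x ≤ ∫ x in (-ℓ)..ℓ, f x := by
  have gain_le_loss : ∫ x in ℓ..(d + ℓ), f x ≤ ∫ x in (-ℓ)..(d - ℓ), f x := by
    have translate : ∫ x in (-ℓ)..(d - ℓ), f (x + 2 * ℓ) = ∫ x in ℓ..(d + ℓ), f x := by
      rw [intervalIntegral.integral_comp_add_right f (2 * ℓ)]
      ring_nf
    have shifted : IntervalIntegrable (fun x => f (x + 2 * ℓ)) volume (-ℓ) (d - ℓ) := by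
      convert (hf.intervalIntegrable ℓ (d + ℓ)).comp_add_right (2 * ℓ) using 1 <;> ring
    rw [← translate]
    refine intervalIntegral.integral_mono_on (by linarith) shifted (hf.intervalIntegrable _ _)
      fun x hx => hf _ _ ?_
    rw [abs_of_nonneg (by linarith [hx.1] : 0 ≤ x + 2 * ℓ)]
    exact abs_le.mpr ⟨by linarith [hx.1], by linarith⟩
  rw [← intervalIntegral.integral_add_adjacent_intervals (hf.intervalIntegrable (d - ℓ) ℓ)
      (hf.intervalIntegrable ℓ (d + ℓ)),
    ← intervalIntegral.integral_add_adjacent_intervals (hf.intervalIntegrable (-ℓ) (d - ℓ))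
      (hf.intervalIntegrable (d - ℓ) ℓ)]
  linarith

theorem intervalIntegral_shift_le {ℓ : ℝ} (hℓ : 0 ≤ ℓ) (d : ℝ) :
    ∫ x in (d - ℓ)..(d + ℓ), f x ≤ ∫ x in (-ℓ)..ℓ, f x := by
  rcases le_total 0 d with hd | hd
  · exact hf.intervalIntegral_shift_le_of_nonneg hℓ hd
  · calc ∫ x in (d - ℓ)..(d + ℓ), f x
        = ∫ x in (-d - ℓ)..(-d + ℓ), f (-x) := by
          rw [intervalIntegral.integral_comp_neg]
          congr 1 <;> ring
      _ ≤ ∫ x in (-ℓ)..ℓ, f (-x) :=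
          hf.comp_neg.intervalIntegral_shift_le_of_nonneg hℓ (neg_nonneg.mpr hd)
      _ = ∫ x in (-ℓ)..ℓ, f x := by rw [intervalIntegral.integral_comp_neg, neg_neg]

theorem setIntegral_Icc_sub_le {ℓ : ℝ} (hℓ : 0 ≤ ℓ) (m c : ℝ) :
    ∫ x in Icc (c - ℓ) (c + ℓ), f (x - m) ≤ ∫ x in Icc (m - ℓ) (m + ℓ), f (x - m) := by
  have centre : ∀ a, ∫ x in Icc (a - ℓ) (a + ℓ), f (x - m) =
      ∫ x in (a - m - ℓ)..(a - m + ℓ), f x := by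
    intro a
    rw [integral_Icc_eq_integral_Ioc, ← intervalIntegral.integral_of_le (by linarith),
      intervalIntegral.integral_comp_sub_right]
    congr 1 <;> ring
  rw [centre, centre, sub_self, zero_sub, zero_add]
  exact hf.intervalIntegral_shift_le hℓ (c - m)

end IsSymmetricDecreasing

theorem isSymmetricDecreasing_gaussian (ε : ℝ) :
    IsSymmetricDecreasing fun x => exp (-x ^ 2 / (2 * ε ^ 2)) := fun x y hxy => by
  dsimp only
  gcongr exp (-?_ / _)
  exact sq_le_sq.mpr hxy

theorem tracking_minimizer_maximizes_mtll_integral_general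
    (ℓ ε : ℝ) (hℓ : 0 < ℓ)
    (μ : ℝ → ℝ)
    (α : ℝ → ℝ) (hα : ∀ t, 0 ≤ α t) :
    (∀ t c : ℝ,
      (∫ x in Set.Icc (c - ℓ) (c + ℓ), Real.exp (-(x - μ t)^2 / (2 * ε^2))) ≤
        ∫ x in Set.Icc (μ t - ℓ) (μ t + ℓ), Real.exp (-(x - μ t)^2 / (2 * ε^2))) ∧
    (∀ c : ℝ → ℝ, Continuous c →
      (∫⁻ t in Set.Ioi (0:ℝ),
          ENNReal.ofReal (α t * ∫ x in Set.Icc (c t - ℓ) (c t + ℓ),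
            Real.exp (-(x - μ t)^2 / (2 * ε^2)))) ≤
        ∫⁻ t in Set.Ioi (0:ℝ),
          ENNReal.ofReal (α t * ∫ x in Set.Icc (μ t - ℓ) (μ t + ℓ),
            Real.exp (-(x - μ t)^2 / (2 * ε^2)))) := by
  have window_le (m c : ℝ) := (isSymmetricDecreasing_gaussian ε).setIntegral_Icc_sub_le hℓ.le m c
  refine ⟨fun t c => window_le (μ t) c, fun c _ => lintegral_mono fun t => ?_⟩
  exact ENNReal.ofReal_le_ofReal (mul_le_mul_of_nonneg_left (window_le (μ t) (c t)) (hα t))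

theorem tracking_minimizer_maximizes_mtll_integral
    (ℓ ε : ℝ) (hℓ : 0 < ℓ) (hε : 0 < ε)
    (μ : ℝ → ℝ) (hμ : Continuous μ)
    (α : ℝ → ℝ) (hα : ∀ t, 0 ≤ α t)
    (hfin : ∫⁻ t in Set.Ioi (0:ℝ),
        ENNReal.ofReal (α t * ∫ x in Set.Icc (μ t - ℓ) (μ t + ℓ),
          Real.exp (-(x - μ t)^2 / (2 * ε^2))) < ⊤) :
    (∀ t c : ℝ,
      (∫ x in Set.Icc (c - ℓ) (c + ℓ), Real.exp (-(x - μ t)^2 / (2 * ε^2))) ≤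
        ∫ x in Set.Icc (μ t - ℓ) (μ t + ℓ), Real.exp (-(x - μ t)^2 / (2 * ε^2))) ∧
    (∀ c : ℝ → ℝ, Continuous c →
      (∫⁻ t in Set.Ioi (0:ℝ),
          ENNReal.ofReal (α t * ∫ x in Set.Icc (c t - ℓ) (c t + ℓ),
            Real.exp (-(x - μ t)^2 / (2 * ε^2)))) ≤
        ∫⁻ t in Set.Ioi (0:ℝ),
          ENNReal.ofReal (α t * ∫ x in Set.Icc (μ t - ℓ) (μ t + ℓ),
            Real.exp (-(x - μ t)^2 / (2 * ε^2)))) :=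
  tracking_minimizer_maximizes_mtll_integral_general ℓ ε hℓ μ α hα
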